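/- Let B be a strong bimonoid. Then the following two statements are equivalent: (A) B is bi-locally finite; (B) for each ranked alphabet Σ and for each (Σ,B)-weighted tree automaton 𝒜, the set im(⟦𝒜⟧_run) is finite. -/

import Mathlib

/-- A strong bimonoid: `(B,+,0)` a commutative monoid, `(B,*,1)` a monoid,
and `0` annihilating for `*`. -/
class StrongBimonoid (B : Type*) extends AddCommMonoid B, MonoidWithZero B

section Defs

variable {B : Type*} [StrongBimonoid B]

/-- The closure `⟨A⟩_{⊕,⊗,0,1}` of a subset `A`: the smallest subset of `B`
containing `A ∪ {0,1}` and closed under `+` and `*`. -/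
inductive SBClosure (A : Set B) : B → Prop
  | base {a : B} : a ∈ A → SBClosure A a
  | zero : SBClosure A 0
  | one : SBClosure A 1
  | add {a b : B} : SBClosure A a → SBClosure A b → SBClosure A (a + b)
  | mul {a b : B} : SBClosure A a → SBClosure A b → SBClosure A (a * b)

/-- `B` is locally finite if the closure of each finite subset is finite. -/
def SBLocallyFinite (B : Type*) [StrongBimonoid B] : Prop :=
  ∀ A : Set B, A.Finite → {b : B | SBClosure A b}.Finite

/-- The weak closure `wcl(A)`: the smallest subset containing `A ∪ {0,1}` closed
under addition and under multiplication on the right by elements of `A`. -/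
inductive WeakClosure (A : Set B) : B → Prop
  | base {a : B} : a ∈ A → WeakClosure A a
  | zero : WeakClosure A 0
  | one : WeakClosure A 1
  | add {b b' : B} : WeakClosure A b → WeakClosure A b' → WeakClosure A (b + b')
  | mulr {b a : B} : WeakClosure A b → a ∈ A → WeakClosure A (b * a)

/-- `B` is weakly locally finite if the weak closure of each finite subset is finite. -/
def WeaklyLocallyFinite (B : Type*) [StrongBimonoid B] : Prop :=
  ∀ A : Set B, A.Finite → {b : B | WeakClosure A b}.Finite

/-- `B` is additively locally finite if each finitely generated submonoid of `(B,+,0)` is finite. -/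
def AddLocallyFinite (B : Type*) [StrongBimonoid B] : Prop :=
  ∀ A : Set B, A.Finite → ((AddSubmonoid.closure A : AddSubmonoid B) : Set B).Finite

/-- `B` is multiplicatively locally finite if each finitely generated submonoid of `(B,*,1)` is finite. -/
def MulLocallyFinite (B : Type*) [StrongBimonoid B] : Prop :=
  ∀ A : Set B, A.Finite → ((Submonoid.closure A : Submonoid B) : Set B).Finite

/-- `B` is bi-locally finite if it is additively and multiplicatively locally finite. -/
def BiLocallyFinite (B : Type*) [StrongBimonoid B] : Prop :=
  AddLocallyFinite B ∧ MulLocallyFinite B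

/-- `B` is almost idempotent if `b + b + b = b + b` for all `b`. -/
def AlmostIdempotent (B : Type*) [StrongBimonoid B] : Prop :=
  ∀ b : B, b + b + b = b + b

/-- right-distributivity -/
def SBRightDistributive (B : Type*) [StrongBimonoid B] : Prop :=
  ∀ a b c : B, (a + b) * c = a * c + b * c

/-- left-distributivity -/
def SBLeftDistributive (B : Type*) [StrongBimonoid B] : Prop :=
  ∀ a b c : B, a * (b + c) = a * b + a * c

end Defs

/-- A ranked alphabet: a finite nonempty set of symbols with a rank map,
having at least one nullary symbol. -/
structure RankedAlphabet where
  symb : Type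
  fintype_symb : Fintype symb
  nonempty_symb : Nonempty symb
  rk : symb → ℕ
  exists_nullary : ∃ σ, rk σ = 0

attribute [instance] RankedAlphabet.fintype_symb RankedAlphabet.nonempty_symb

/-- Trees (ground terms) over a ranked alphabet. -/
inductive RTree (S : RankedAlphabet) : Type
  | node (σ : S.symb) (ts : Fin (S.rk σ) → RTree S) : RTree S

/-- A weighted tree automaton over the ranked alphabet `S` and the strong bimonoid `B`. -/
structure WTA (S : RankedAlphabet) (B : Type) [StrongBimonoid B] where
  Q : Type
  fintypeQ : Fintype Q
  nonemptyQ : Nonempty Q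
  δ : (σ : S.symb) → (Fin (S.rk σ) → Q) → Q → B
  F : Q → B

attribute [instance] WTA.fintypeQ WTA.nonemptyQ

variable {S : RankedAlphabet} {B : Type} [StrongBimonoid B]

/-- The vector `h_𝒜(t) ∈ B^Q`:
`h_𝒜(σ(t_1,…,t_k))_q = ⊕_{q_1⋯q_k ∈ Q^k} (⊗_i h_𝒜(t_i)_{q_i}) ⊗ δ_k(q_1⋯q_k,σ,q)`. -/
def WTA.h (M : WTA S B) : RTree S → M.Q → B
  | .node σ ts => fun q =>
      ∑ qs : Fin (S.rk σ) → M.Q,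
        (((List.finRange (S.rk σ)).map (fun i => M.h (ts i) (qs i))).prod) * M.δ σ qs q

/-- The initial algebra semantics `⟦𝒜⟧_init(t) = ⊕_{q ∈ Q} h_𝒜(t)_q ⊗ F_q`. -/
noncomputable def WTA.initSem (M : WTA S B) (t : RTree S) : B :=
  ∑ q, M.h t q * M.F q

/-- The positions of a tree (as lists of natural numbers). -/
def RTree.pos : RTree S → Finset (List ℕ)
  | .node _ ts =>
      insert [] (Finset.univ.biUnion fun i => ((ts i).pos).image (fun w => (i : ℕ) :: w))

/-- The weight of a run `ρ` (given as a total map on positions) on a tree: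
`wt(σ(t_1,…,t_k),ρ) = (⊗_i wt(t_i,ρ_i)) ⊗ δ_k(ρ(1)⋯ρ(k),σ,ρ(ε))`. -/
def WTA.wt (M : WTA S B) : RTree S → (List ℕ → M.Q) → B
  | .node σ ts => fun ρ =>
      (((List.finRange (S.rk σ)).map
          (fun i => M.wt (ts i) (fun w => ρ ((i : ℕ) :: w)))).prod)
        * M.δ σ (fun i => ρ [(i : ℕ)]) (ρ [])

/-- Extend a run, defined on the positions of `t`, to a total map on `List ℕ`. -/
noncomputable def WTA.extend (M : WTA S B) (t : RTree S) (ρ : ↑(t.pos) → M.Q) :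
    List ℕ → M.Q :=
  fun w => if h : w ∈ t.pos then ρ ⟨w, h⟩ else Classical.choice M.nonemptyQ

/-- The run semantics `⟦𝒜⟧_run(t) = ⊕_{ρ run of 𝒜 on t} wt(t,ρ) ⊗ F_{ρ(ε)}`. -/
noncomputable def WTA.runSem (M : WTA S B) (t : RTree S) : B :=
  ∑ ρ : (↑(t.pos) → M.Q), M.wt t (M.extend t ρ) * M.F (M.extend t ρ [])

/-!
Every run weight is a product of transition weights, so the image of `⟦𝒜⟧_run` lies in the
additive closure of the multiplicative closure of the finitely many weights of `𝒜`.

Conversely, over the monadic trees `a₁(a₂(⋯(#)))` the one-state wta with weight `a` on the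
symbol `a` computes the products of the `aᵢ`, so it reaches the whole submonoid generated by
finitely many `a`. The two-state wta with all transition weights `1` and final weights `b` maps
a tree `t` to `2 ^ |pos t| • b`; finiteness of these values makes the multiples of `b` repeat,
hence finitely many, and in a commutative monoid this gives additive local finiteness.
-/

open Function

section Multiples

variable {M : Type*}

lemma AddSubmonoid.finite_multiples_of_nsmul_eq [AddMonoid M] {b : M} {j k : ℕ} (hjk : j < k)
    (h : j • b = k • b) : (AddSubmonoid.multiples b : Set M).Finite := by
  have below_k : ∀ n : ℕ, ∃ m < k, m • b = n • b := by
    intro n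
    induction n using Nat.strong_induction_on with
    | _ n ih =>
      rcases lt_or_ge n k with hn | hn
      · exact ⟨n, hn, rfl⟩
      · obtain ⟨m, hm, he⟩ := ih (n - (k - j)) (by omega)
        refine ⟨m, hm, he.trans ?_⟩
        calc (n - (k - j)) • b = (n - k) • b + j • b := by rw [← add_nsmul]; congr 1; omega
          _ = n • b := by rw [h, ← add_nsmul]; congr 1; omega
  rw [AddSubmonoid.coe_multiples]
  refine ((Set.finite_lt_nat k).image (· • b)).subset ?_
  rintro _ ⟨n, rfl⟩
  exact below_k n

lemma AddSubmonoid.finite_multiples_of_finite_range_nsmul [AddMonoid M] {b : M} {f : ℕ → ℕ}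
    (hf : Injective f) (h : (Set.range fun n => f n • b).Finite) :
    (AddSubmonoid.multiples b : Set M).Finite := by
  obtain ⟨i, j, hij, hne⟩ :=
    not_injective_iff.1 fun hinj => Set.infinite_range_of_injective hinj h
  rcases (hf.ne hne).lt_or_gt with hlt | hlt
  · exact finite_multiples_of_nsmul_eq hlt hij
  · exact finite_multiples_of_nsmul_eq hlt hij.symm

lemma AddSubmonoid.finite_closure_of_finite_multiples [AddCommMonoid M] {A : Set M}
    (hA : A.Finite) (h : ∀ a ∈ A, (AddSubmonoid.multiples a : Set M).Finite) :
    (AddSubmonoid.closure A : Set M).Finite := by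
  induction A, hA using Set.Finite.induction_on with
  | empty => simp
  | @insert a s _ _ ih =>
    rw [Set.insert_eq, closure_union, coe_sup, ← multiples_eq_closure]
    exact (h a (Set.mem_insert a s)).add (ih fun b hb => h b (Set.mem_insert_of_mem a hb))

end Multiples

namespace WTA

variable (M : WTA S B)

def weights : Set B :=
  Set.range (fun x : (σ : S.symb) × (Fin (S.rk σ) → M.Q) × M.Q => M.δ x.1 x.2.1 x.2.2) ∪
    Set.range M.F

lemma finite_weights : M.weights.Finite :=
  (Set.finite_range _).union (Set.finite_range _)

lemma wt_mem_closure_weights (t : RTree S) (ρ : List ℕ → M.Q) :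
    M.wt t ρ ∈ Submonoid.closure M.weights := by
  induction t generalizing ρ with
  | node σ ts ih =>
    rw [WTA.wt]
    refine mul_mem (Submonoid.list_prod_mem _ ?_)
      (Submonoid.subset_closure (Or.inl ⟨⟨σ, _, _⟩, rfl⟩))
    simp only [List.mem_map]
    rintro _ ⟨i, -, rfl⟩
    exact ih i _

lemma runSem_mem_closure_weights (t : RTree S) :
    M.runSem t ∈ AddSubmonoid.closure (Submonoid.closure M.weights : Set B) :=
  AddSubmonoid.sum_mem _ fun _ _ => AddSubmonoid.subset_closure
    (mul_mem (M.wt_mem_closure_weights t _) (Submonoid.subset_closure (Or.inr ⟨_, rfl⟩)))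

variable {M}

lemma wt_eq_one (hδ : ∀ σ qs q, M.δ σ qs q = 1) (t : RTree S) (ρ : List ℕ → M.Q) :
    M.wt t ρ = 1 := by
  induction t generalizing ρ with
  | node σ ts ih =>
    simp only [WTA.wt, hδ, mul_one]
    exact List.prod_eq_one (by simp [ih])

lemma runSem_eq_nsmul {b : B} (hδ : ∀ σ qs q, M.δ σ qs q = 1) (hF : ∀ q, M.F q = b)
    (t : RTree S) : M.runSem t = Fintype.card M.Q ^ t.pos.card • b := by
  simp [WTA.runSem, wt_eq_one hδ, hF]

end WTA

def unaryAlphabet (X : Type) [Fintype X] : RankedAlphabet where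
  symb := Option X
  fintype_symb := inferInstance
  nonempty_symb := ⟨none⟩
  rk s := s.elim 0 fun _ => 1
  exists_nullary := ⟨none, rfl⟩

section Unary

variable {X : Type} [Fintype X]

namespace RTree

def leaf : RTree (unaryAlphabet X) := .node none Fin.elim0

def unary (x : X) (t : RTree (unaryAlphabet X)) : RTree (unaryAlphabet X) :=
  .node (some x) fun _ => t

lemma card_pos_unary (x : X) (t : RTree (unaryAlphabet X)) :
    (unary x t).pos.card = t.pos.card + 1 := by
  change (insert [] ((Finset.univ : Finset (Fin 1)).biUnion
    fun i => t.pos.image (List.cons (i : ℕ)))).card = _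
  simp [Finset.card_image_of_injective _ List.cons_injective]

lemma card_pos_iterate_unary (x : X) (n : ℕ) : ((unary x)^[n] leaf).pos.card = n + 1 := by
  induction n with
  | zero => rfl
  | succ n ih => rw [iterate_succ_apply', card_pos_unary, ih]

end RTree

namespace WTA

variable (M : WTA (unaryAlphabet X) B)

lemma wt_leaf (ρ : List ℕ → M.Q) :
    M.wt .leaf ρ = M.δ none (fun i => ρ [(i : ℕ)]) (ρ []) :=
  one_mul _

lemma wt_unary (x : X) (t : RTree (unaryAlphabet X)) (ρ : List ℕ → M.Q) :
    M.wt (t.unary x) ρ =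
      M.wt t (fun w => ρ (0 :: w)) * M.δ (some x) (fun i => ρ [(i : ℕ)]) (ρ []) := by
  change (M.wt t (fun w => ρ (0 :: w)) * 1) * _ = _
  rw [mul_one]

end WTA

end Unary

def doublingWTA (b : B) : WTA (unaryAlphabet Unit) B where
  Q := Bool
  fintypeQ := inferInstance
  nonemptyQ := inferInstance
  δ _ _ _ := 1
  F _ := b

lemma doublingWTA_runSem (b : B) (n : ℕ) :
    (doublingWTA b).runSem ((RTree.unary ())^[n] .leaf) = 2 ^ (n + 1) • b := by
  rw [WTA.runSem_eq_nsmul (fun _ _ _ => rfl) (fun _ => rfl), RTree.card_pos_iterate_unary]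
  rfl

def productWTA {X : Type} [Fintype X] (v : X → B) : WTA (unaryAlphabet X) B where
  Q := Unit
  fintypeQ := inferInstance
  nonemptyQ := inferInstance
  δ s _ _ := s.elim 1 v
  F _ := 1

section productWTA

variable {X : Type} [Fintype X] (v : X → B)

instance : Unique (productWTA v).Q := inferInstanceAs (Unique Unit)

lemma productWTA_runSem (t : RTree (unaryAlphabet X)) :
    (productWTA v).runSem t = (productWTA v).wt t default := by
  rw [WTA.runSem, Fintype.sum_unique, Subsingleton.elim (WTA.extend _ _ _) default]
  exact mul_one _

lemma productWTA_runSem_leaf : (productWTA v).runSem .leaf = 1 := by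
  rw [productWTA_runSem, WTA.wt_leaf]
  rfl

lemma productWTA_runSem_unary (x : X) (t : RTree (unaryAlphabet X)) :
    (productWTA v).runSem (t.unary x) = (productWTA v).runSem t * v x := by
  rw [productWTA_runSem, productWTA_runSem, WTA.wt_unary, Subsingleton.elim (fun _ => _) default]
  rfl

end productWTA

lemma finite_multiples_of_finite_range_runSem
    (h : ∀ (S : RankedAlphabet) (M : WTA S B), (Set.range M.runSem).Finite) (b : B) :
    (AddSubmonoid.multiples b : Set B).Finite :=
  AddSubmonoid.finite_multiples_of_finite_range_nsmul
    ((Nat.pow_right_injective le_rfl).comp (add_left_injective 1))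
    ((h _ (doublingWTA b)).subset (Set.range_subset_iff.2 fun n => ⟨_, doublingWTA_runSem b n⟩))

lemma closure_subset_range_productWTA_runSem (A : Set B) [Fintype A] :
    (Submonoid.closure A : Set B) ⊆ Set.range (productWTA ((↑) : A → B)).runSem := by
  intro b hb
  induction hb using Submonoid.closure_induction_right with
  | one => exact ⟨.leaf, productWTA_runSem_leaf _⟩
  | mul_right x _ a ha ih =>
    obtain ⟨t, ht⟩ := ih
    exact ⟨t.unary ⟨a, ha⟩, by rw [productWTA_runSem_unary, ht]⟩

/-- `B` is bi-locally finite iff for every ranked alphabet `Σ` and every wta `𝒜` over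
`Σ` and `B`, the image of the run semantics of `𝒜` is finite. -/
theorem statement8 (B : Type) [StrongBimonoid B] :
    BiLocallyFinite B ↔
      ∀ (S : RankedAlphabet) (M : WTA S B), (Set.range M.runSem).Finite := by
  constructor
  · rintro ⟨hAdd, hMul⟩ S M
    exact (hAdd _ (hMul _ M.finite_weights)).subset
      (Set.range_subset_iff.2 M.runSem_mem_closure_weights)
  · intro h
    refine ⟨fun A hA => AddSubmonoid.finite_closure_of_finite_multiples hA
      fun b _ => finite_multiples_of_finite_range_runSem h b, fun A hA => ?_⟩
    have := hA.fintype
    exact (h _ (productWTA ((↑) : A → B))).subset (closure_subset_range_productWTA_runSem A)
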